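/- Line linking into a complete graph: with a simple line of n_L nodes where node j additionally links to node g of a complete graph with n_G ≥ 2 nodes (node j thus has 2 outgoing links of weight 1/2 each), the PageRanks are: R_i = (1 - c^{n_L+1-i})/(1-c) for line nodes i ≥ j; R_i = (1-c^{j-i})/(1-c) + (c^{j-i}/2)(1-c^{n_L-j+1})/(1-c) for line nodes i < j; R_g = (c(1-c^{n_L+1-j})/(2(1-c)))·((n_G-1)-c(n_G-2))/((n_G-1)-c(n_G-2)-c²) + 1/(1-c) for the targeted graph node; and R_i = (c²(1-c^{n_L+1-j})/(2(1-c)))·1/((n_G-1)-c(n_G-2)-c²) + 1/(1-c) for each other graph node. -/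

import Mathlib

/-!
Since `A` is nonnegative with row sums at most `1` and `c < 1`, the matrix `1 - c Aᵀ` is
strictly diagonally dominant, hence invertible, so `R` is the unique solution of
`R = 1 + c Aᵀ R` and it suffices to check this equation for the claimed values, node by node.
A line node receives only from its successor, which produces the geometric sums
`(1 - c^k) / (1 - c)`. The complete graph receives `c R_{j}/2` at node `g` and otherwise only
averages over itself, leaving a `2 × 2` linear system for the value at `g` and the common value
at the other graph nodes; its determinant is `(1 - c)(n_G - 1 + c)`.
-/

open Matrix Finset

theorem sum_ite_zero_eq_card_filter_mul {ι R : Type*} [NonAssocSemiring R] (S : Finset ι)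
    (p : ι → Prop) [DecidablePred p] (a : R) :
    ∑ i ∈ S, (if p i then a else 0) = #{i ∈ S | p i} * a := by
  rw [← sum_filter, sum_const, nsmul_eq_mul]

section PageRank

variable {n : Type*} [Fintype n] [DecidableEq n] {A : Matrix n n ℝ} {c : ℝ}

theorem det_one_sub_smul_transpose_ne_zero (hA : ∀ i j, 0 ≤ A i j)
    (hrow : ∀ i, ∑ j, A i j ≤ 1) (hc0 : 0 ≤ c) (hc1 : c < 1) :
    (1 - c • Aᵀ).det ≠ 0 := by
  refine det_ne_zero_of_sum_col_lt_diag fun k => ?_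
  have hoff : ∀ i ∈ univ.erase k, ‖(1 - c • Aᵀ) i k‖ = c * A k i := fun i hi => by
    rw [Matrix.sub_apply, one_apply_ne (ne_of_mem_erase hi), Matrix.smul_apply, transpose_apply,
      zero_sub, norm_neg, smul_eq_mul, Real.norm_of_nonneg (mul_nonneg hc0 (hA k i))]
  have hdiag : ‖(1 - c • Aᵀ) k k‖ = 1 - c * A k k := by
    have : c * A k k ≤ c := by
      simpa using mul_le_mul_of_nonneg_left
        ((single_le_sum (fun i _ => hA k i) (mem_univ k)).trans (hrow k)) hc0
    rw [Matrix.sub_apply, one_apply_eq, Matrix.smul_apply, transpose_apply, smul_eq_mul,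
      Real.norm_of_nonneg (by linarith)]
  rw [sum_congr rfl hoff, hdiag, sum_erase_eq_sub (mem_univ k), ← mul_sum]
  nlinarith [hrow k]

theorem inv_one_sub_smul_transpose_mulVec_one_eq (hA : ∀ i j, 0 ≤ A i j)
    (hrow : ∀ i, ∑ j, A i j ≤ 1) (hc0 : 0 ≤ c) (hc1 : c < 1) {x : n → ℝ}
    (hx : ∀ s, x s = 1 + c * ∑ r, A r s * x r) :
    (1 - c • Aᵀ)⁻¹ *ᵥ (fun _ => 1) = x := by
  have hMx : (1 - c • Aᵀ) *ᵥ x = fun _ => 1 := by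
    funext s
    rw [sub_mulVec, one_mulVec, Pi.sub_apply, smul_mulVec, Pi.smul_apply, smul_eq_mul]
    simp only [mulVec, dotProduct, transpose_apply]
    linarith [hx s]
  rw [← hMx, mulVec_mulVec, nonsing_inv_mul _
    (isUnit_iff_ne_zero.mpr (det_one_sub_smul_transpose_ne_zero hA hrow hc0 hc1)), one_mulVec]

end PageRank

namespace LineToComplete

variable (nL nG j g : ℕ)

-- The entry `A r s` (weight of the link `r → s`), as a function of the indices in `ℕ`.
noncomputable def linkWeight (r s : ℕ) : ℝ :=
  if r < nL then
    if r + 1 = j then (if r = s + 1 ∨ s = nL + g - 1 then 1 / 2 else 0)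
    else (if r = s + 1 ∧ s < nL then 1 else 0)
  else if nL ≤ s ∧ s ≠ r then 1 / ((nG : ℝ) - 1) else 0

variable {nL nG j g}

theorem linkWeight_nonneg (hnG : 1 ≤ nG) (r s : ℕ) : 0 ≤ linkWeight nL nG j g r s := by
  unfold linkWeight
  split_ifs <;> norm_num [hnG]

theorem sum_linkWeight_le_one (hnG : 1 ≤ nG) {r : ℕ} (hr : r < nL + nG) :
    ∑ s ∈ range (nL + nG), linkWeight nL nG j g r s ≤ 1 := by
  unfold linkWeight
  split_ifs with hrL hj
  · rw [sum_ite_zero_eq_card_filter_mul]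
    have hcard : #{s ∈ range (nL + nG) | r = s + 1 ∨ s = nL + g - 1} ≤ 2 :=
      (card_le_card fun s hs => by
        simp only [mem_filter] at hs; simp only [mem_insert, mem_singleton]; omega).trans
        (card_le_two (a := r - 1) (b := nL + g - 1))
    have hcard' := (Nat.cast_le (α := ℝ)).mpr hcard
    push_cast at hcard'
    linarith
  · rw [sum_ite_zero_eq_card_filter_mul, mul_one, Nat.cast_le_one]
    exact card_le_one.mpr fun a ha b hb => by simp only [mem_filter] at ha hb; omega
  · rw [sum_ite_zero_eq_card_filter_mul]
    have hfilter : {s ∈ range (nL + nG) | nL ≤ s ∧ s ≠ r} = (Ico nL (nL + nG)).erase r := by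
      ext s; simp only [mem_filter, mem_range, mem_erase, mem_Ico]; omega
    rw [hfilter, card_erase_of_mem (by simp; omega), Nat.card_Ico, Nat.add_sub_cancel_left,
      Nat.cast_sub hnG, Nat.cast_one, mul_one_div]
    exact div_self_le_one _

theorem sum_linkWeight_mul_of_lt (hg : 1 ≤ g) {s : ℕ} (hs : s < nL) (x : ℕ → ℝ) :
    ∑ r ∈ range (nL + nG), linkWeight nL nG j g r s * x r =
      if s + 1 < nL then (if s + 2 = j then 1 / 2 else 1) * x (s + 1) else 0 := by
  have hweight : linkWeight nL nG j g (s + 1) s =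
      if s + 1 < nL then (if s + 2 = j then 1 / 2 else 1) else 0 := by
    unfold linkWeight
    split_ifs <;> first | rfl | omega
  rw [sum_eq_single (s + 1), hweight, ite_mul, zero_mul]
  · intro r _ hr
    rw [linkWeight, mul_eq_zero]
    left
    split_ifs <;> first | rfl | omega
  · intro h
    rw [hweight, if_neg (by simp at h; omega), zero_mul]

theorem sum_linkWeight_mul_of_le (hj1 : 1 ≤ j) (hj2 : j ≤ nL) {s : ℕ} (hs : nL ≤ s)
    (hs' : s < nL + nG) (x : ℕ → ℝ) :
    ∑ r ∈ range (nL + nG), linkWeight nL nG j g r s * x r =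
      (if s = nL + g - 1 then x (j - 1) / 2 else 0) +
        (∑ b ∈ range nG, x (nL + b) - x s) / ((nG : ℝ) - 1) := by
  rw [sum_range_add]
  congr 1
  · rw [sum_eq_single (j - 1)]
    · unfold linkWeight
      rw [if_pos (by omega), if_pos (by omega)]
      split_ifs <;> first | omega | ring
    · intro r hr hrj
      rw [linkWeight, mul_eq_zero]
      left
      simp only [mem_range] at hr
      split_ifs <;> first | rfl | omega
    · intro h
      simp at h
      omega
  · have hterm : ∀ b ∈ range nG, linkWeight nL nG j g (nL + b) s * x (nL + b) =
        x (nL + b) / ((nG : ℝ) - 1) - if b = s - nL then x s / ((nG : ℝ) - 1) else 0 := by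
      intro b _
      unfold linkWeight
      rw [if_neg (by omega)]
      by_cases hb : b = s - nL
      · rw [if_neg (by omega), if_pos hb, show nL + b = s by omega]
        ring
      · rw [if_pos (by omega), if_neg hb]
        ring
    rw [sum_congr rfl hterm, sum_sub_distrib, sum_ite_eq', if_pos (by simp; omega), ← sum_div,
      sub_div]

variable (nL nG j g) (c : ℝ)

noncomputable def lineRank (i : ℕ) : ℝ :=
  if j ≤ i + 1 then (1 - c ^ (nL - i)) / (1 - c)
  else (1 - c ^ (j - 1 - i)) / (1 - c) + (c ^ (j - 1 - i) / 2) * (1 - c ^ (nL - j + 1)) / (1 - c)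

noncomputable def targetRank : ℝ :=
  (c * (1 - c ^ (nL + 1 - j)) / (2 * (1 - c))) *
      ((((nG : ℝ) - 1) - c * ((nG : ℝ) - 2)) /
        ((((nG : ℝ) - 1) - c * ((nG : ℝ) - 2)) - c ^ 2)) + 1 / (1 - c)

noncomputable def otherRank : ℝ :=
  (c ^ 2 * (1 - c ^ (nL + 1 - j)) / (2 * (1 - c))) *
      (1 / ((((nG : ℝ) - 1) - c * ((nG : ℝ) - 2)) - c ^ 2)) + 1 / (1 - c)

noncomputable def pagerank (i : ℕ) : ℝ :=
  if i < nL then lineRank nL j c i else if i = nL + g - 1 then targetRank nL nG j c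
  else otherRank nL nG j c

variable {nL nG j g c}

theorem graph_denominator_pos (hnG : 2 ≤ nG) (hc0 : 0 ≤ c) (hc1 : c < 1) :
    0 < (((nG : ℝ) - 1) - c * ((nG : ℝ) - 2)) - c ^ 2 := by
  have hnG' : (2 : ℝ) ≤ nG := by exact_mod_cast hnG
  rw [show (((nG : ℝ) - 1) - c * ((nG : ℝ) - 2)) - c ^ 2 = (1 - c) * ((nG : ℝ) - 1 + c) by ring]
  exact mul_pos (by linarith) (by linarith)

theorem lineRank_eq (hc : c ≠ 1) (hj : j ≤ nL) {s : ℕ} (hs : s < nL) :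
    lineRank nL j c s =
      1 + c * (if s + 1 < nL then (if s + 2 = j then 1 / 2 else 1) * lineRank nL j c (s + 1)
        else 0) := by
  have hc' : 1 - c ≠ 0 := sub_ne_zero.mpr hc.symm
  unfold lineRank
  by_cases hlast : s + 1 = nL
  · rw [if_pos (show j ≤ s + 1 by omega), if_neg (show ¬s + 1 < nL by omega),
      show nL - s = 1 by omega]
    field_simp
    ring
  rw [if_pos (show s + 1 < nL by omega)]
  by_cases hsj : j ≤ s + 1
  · rw [if_pos hsj, if_neg (show s + 2 ≠ j by omega), if_pos (show j ≤ s + 1 + 1 by omega),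
      show nL - s = nL - (s + 1) + 1 by omega]
    field_simp
    ring
  rw [if_neg hsj]
  by_cases hsj' : s + 2 = j
  · rw [if_pos hsj', if_pos (show j ≤ s + 1 + 1 by omega), show j - 1 - s = 1 by omega,
      show nL - (s + 1) = nL - j + 1 by omega]
    field_simp
  · rw [if_neg hsj', if_neg (show ¬j ≤ s + 1 + 1 by omega),
      show j - 1 - s = j - 1 - (s + 1) + 1 by omega]
    field_simp
    ring

theorem targetRank_eq (hnG : 2 ≤ nG) (hc0 : 0 ≤ c) (hc1 : c < 1) (hj : 1 ≤ j) :
    targetRank nL nG j c = 1 + c * (lineRank nL j c (j - 1) / 2 + otherRank nL nG j c) := by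
  have hc' : 1 - c ≠ 0 := by linarith
  have hD := (graph_denominator_pos hnG hc0 hc1).ne'
  unfold targetRank otherRank lineRank
  rw [if_pos (by omega), show nL - (j - 1) = nL + 1 - j by omega]
  field_simp
  ring

theorem otherRank_eq (hnG : 2 ≤ nG) (hc0 : 0 ≤ c) (hc1 : c < 1) :
    otherRank nL nG j c =
      1 + c * (targetRank nL nG j c + ((nG : ℝ) - 2) * otherRank nL nG j c) / ((nG : ℝ) - 1) := by
  have hnG' : (2 : ℝ) ≤ nG := by exact_mod_cast hnG
  have hc' : 1 - c ≠ 0 := by linarith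
  have hnG1 : (nG : ℝ) - 1 ≠ 0 := by linarith
  have hD := (graph_denominator_pos hnG hc0 hc1).ne'
  unfold targetRank otherRank
  field_simp
  ring

theorem sum_pagerank_graph (hg1 : 1 ≤ g) (hg2 : g ≤ nG) :
    ∑ b ∈ range nG, pagerank nL nG j g c (nL + b) =
      targetRank nL nG j c + ((nG : ℝ) - 1) * otherRank nL nG j c := by
  have hterm : ∀ b ∈ range nG, pagerank nL nG j g c (nL + b) = otherRank nL nG j c +
      if b = g - 1 then targetRank nL nG j c - otherRank nL nG j c else 0 := by
    intro b _
    unfold pagerank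
    rw [if_neg (by omega)]
    by_cases hb : b = g - 1
    · rw [if_pos (by omega), if_pos hb]
      ring
    · rw [if_neg (by omega), if_neg hb, add_zero]
  rw [sum_congr rfl hterm, sum_add_distrib, sum_const, card_range, sum_ite_eq',
    if_pos (by simp; omega), nsmul_eq_mul]
  ring

theorem pagerank_eq_one_add_sum (hnG : 2 ≤ nG) (hj1 : 1 ≤ j) (hj2 : j ≤ nL) (hg1 : 1 ≤ g)
    (hg2 : g ≤ nG) (hc0 : 0 ≤ c) (hc1 : c < 1) {s : ℕ} (hs : s < nL + nG) :
    pagerank nL nG j g c s =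
      1 + c * ∑ r ∈ range (nL + nG), linkWeight nL nG j g r s * pagerank nL nG j g c r := by
  rcases lt_or_ge s nL with hsL | hsL
  · rw [sum_linkWeight_mul_of_lt hg1 hsL]
    unfold pagerank
    rw [if_pos hsL, lineRank_eq hc1.ne hj2 hsL]
    split_ifs <;> first | omega | rfl
  · have hnG1 : (nG : ℝ) - 1 ≠ 0 := by
      have : (2 : ℝ) ≤ nG := by exact_mod_cast hnG
      linarith
    rw [sum_linkWeight_mul_of_le hj1 hj2 hsL hs, sum_pagerank_graph hg1 hg2]
    unfold pagerank
    rw [if_neg (by omega : ¬ s < nL), if_pos (by omega : j - 1 < nL)]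
    by_cases hsg : s = nL + g - 1
    · rw [if_pos hsg, if_pos hsg, targetRank_eq hnG hc0 hc1 hj1]
      field_simp
      ring
    · rw [if_neg hsg, if_neg hsg, zero_add]
      nth_rewrite 1 [otherRank_eq hnG hc0 hc1]
      field_simp
      ring

end LineToComplete

open LineToComplete in
/-- A simple line on `nL` nodes (indices `0,…,nL-1`) where line node `j` additionally
links (with weight `1/2` each) to node `j-1` and to node `g` of a complete graph on
`nG ≥ 2` nodes (graph node `g` has index `nL+g-1`): formulas for the non-normalized
PageRank of every node. -/
theorem line_links_to_complete_graph_pagerank (nL nG : ℕ) (hnG : 2 ≤ nG)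
    (j : ℕ) (hj1 : 2 ≤ j) (hj2 : j ≤ nL)
    (g : ℕ) (hg1 : 1 ≤ g) (hg2 : g ≤ nG)
    (c : ℝ) (hc0 : 0 < c) (hc1 : c < 1)
    (A : Matrix (Fin (nL + nG)) (Fin (nL + nG)) ℝ)
    (hA : ∀ r s : Fin (nL + nG), A r s =
      if (r : ℕ) < nL then
        (if (r : ℕ) + 1 = j then
          (if (r : ℕ) = (s : ℕ) + 1 ∨ (s : ℕ) = nL + g - 1 then 1 / 2 else 0)
        else (if (r : ℕ) = (s : ℕ) + 1 ∧ (s : ℕ) < nL then 1 else 0))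
      else (if nL ≤ (s : ℕ) ∧ s ≠ r then 1 / ((nG : ℝ) - 1) else 0))
    (R : Fin (nL + nG) → ℝ)
    (hR : R = (1 - c • A.transpose)⁻¹ *ᵥ fun _ => 1) :
    (∀ i : Fin (nL + nG), (i : ℕ) < nL → j ≤ (i : ℕ) + 1 →
        R i = (1 - c ^ (nL - (i : ℕ))) / (1 - c)) ∧
    (∀ i : Fin (nL + nG), (i : ℕ) + 1 < j →
        R i = (1 - c ^ (j - 1 - (i : ℕ))) / (1 - c) +
          (c ^ (j - 1 - (i : ℕ)) / 2) * (1 - c ^ (nL - j + 1)) / (1 - c)) ∧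
    (∀ i : Fin (nL + nG), (i : ℕ) = nL + g - 1 →
        R i = (c * (1 - c ^ (nL + 1 - j)) / (2 * (1 - c))) *
            ((((nG : ℝ) - 1) - c * ((nG : ℝ) - 2)) /
              ((((nG : ℝ) - 1) - c * ((nG : ℝ) - 2)) - c ^ 2)) + 1 / (1 - c)) ∧
    (∀ i : Fin (nL + nG), nL ≤ (i : ℕ) → (i : ℕ) ≠ nL + g - 1 →
        R i = (c ^ 2 * (1 - c ^ (nL + 1 - j)) / (2 * (1 - c))) *
            (1 / ((((nG : ℝ) - 1) - c * ((nG : ℝ) - 2)) - c ^ 2)) + 1 / (1 - c)) := by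
  have hA_eq : A = of fun r s : Fin (nL + nG) => linkWeight nL nG j g r s := by
    ext r s
    simp only [hA, of_apply, linkWeight, Fin.ne_iff_vne]
  have hR_eq : R = fun i : Fin (nL + nG) => pagerank nL nG j g c i := by
    rw [hR, hA_eq]
    refine inv_one_sub_smul_transpose_mulVec_one_eq (fun r s => ?_) (fun r => ?_) hc0.le hc1
      (fun s => ?_)
    · exact linkWeight_nonneg (by omega) r s
    · simpa only [of_apply, Fin.sum_univ_eq_sum_range (linkWeight nL nG j g r)] using
        sum_linkWeight_le_one (by omega) r.isLt
    · simpa only [of_apply,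
        Fin.sum_univ_eq_sum_range (fun r => linkWeight nL nG j g r s * pagerank nL nG j g c r)] using
        pagerank_eq_one_add_sum hnG (by omega) hj2 hg1 hg2 hc0.le hc1 s.isLt
  subst hR_eq
  refine ⟨fun i hi hij => ?_, fun i hij => ?_, fun i hig => ?_, fun i hi hig => ?_⟩
  · simp only [pagerank, lineRank, if_pos hi, if_pos hij]
  · simp only [pagerank, lineRank, if_pos (show (i : ℕ) < nL by omega),
      if_neg (show ¬j ≤ (i : ℕ) + 1 by omega)]
  · simp only [pagerank, targetRank, if_neg (show ¬(i : ℕ) < nL by omega), if_pos hig]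
  · simp only [pagerank, otherRank, if_neg (show ¬(i : ℕ) < nL by omega), if_neg hig]
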